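/- arXiv:2403.04740 — 6 statements merged into one kernel-verified Lean document; each statement's English description precedes it below -/
import Mathlib

section
/- Let N ∈ ℕ and X₁, X₂ ⊆ Fin N be nonempty. Then the second moment of the number of X-pairs of a uniformly random permutation π ∈ S_N satisfies |X₁||X₂|/N ≤ E[|X_π|²] ≤ |X₁||X₂|/N + |X₁|²|X₂|²/N². -/
/-!
Expanding the square, `∑ π, #X_π ^ 2` counts the triples `(π, i, j)` with `i, j ∈ X₁` and
`π i, π j ∈ X₂`. Every injection of an `m`-set into `α` extends to exactly `(N - m)!`
permutations (a translate of the pointwise stabiliser of the set), so the permutations mapping an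
`m`-set into `Y` number `(#Y).descFactorial m * (N - m)!`. With `a = #X₁`, `b = #X₂` this gives
`E[#X_π ^ 2] = a b / N + a (a - 1) b (b - 1) / (N (N - 1))`, and the second term lies between `0`
and `a² b² / N²` because `b (b - 1) / (N (N - 1)) ≤ (b / N)²` for `b ≤ N`.
-/

open Finset Equiv Nat

theorem cast_descFactorial_mul_factorial_div_factorial {a n : ℕ} (k : ℕ) (h : a ≤ n) :
    (a.descFactorial k * (n - k)! : ℝ) / n ! = a.descFactorial k / n.descFactorial k := by
  rcases le_or_gt k n with hk | hk
  · have hD : (n.descFactorial k : ℝ) ≠ 0 := by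
      exact_mod_cast (Nat.descFactorial_pos.mpr hk).ne'
    rw [← Nat.factorial_mul_descFactorial hk, Nat.cast_mul]
    field_simp
  · simp [Nat.descFactorial_eq_zero_iff_lt.mpr (h.trans_lt hk)]

theorem cast_descFactorial_two_div_le_sq {a n : ℕ} (h : a ≤ n) :
    (a.descFactorial 2 : ℝ) / n.descFactorial 2 ≤ ((a : ℝ) / n) ^ 2 := by
  rcases lt_or_ge n 2 with hn | hn
  · rw [Nat.descFactorial_eq_zero_iff_lt.mpr hn, Nat.cast_zero, div_zero]
    positivity
  have hn' : (2 : ℝ) ≤ n := by exact_mod_cast hn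
  have ha : (a : ℝ) ≤ n := by exact_mod_cast h
  rw [Nat.cast_descFactorial_two, Nat.cast_descFactorial_two, div_pow,
    div_le_div_iff₀ (by nlinarith) (by positivity)]
  nlinarith [mul_nonneg (Nat.cast_nonneg a : (0 : ℝ) ≤ a) (sub_nonneg.mpr ha)]

section

variable {α : Type*} [Fintype α] [DecidableEq α]

theorem card_filter_perm_forall_apply_eq {ι : Type*} [Fintype ι] (e f : ι ↪ α) :
    #{π : Perm α | ∀ t, π (e t) = f t} = (Fintype.card α - Fintype.card ι)! := by
  obtain ⟨σ, hσ⟩ := Perm.exists_smul_eq_embedding f e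
  have hσ' (t : ι) : σ (f t) = e t := by rw [← hσ]; rfl
  have hstab :
      #{π : Perm α | ∀ t, π (e t) = f t} = #{π : Perm α | ∀ t, π (e t) = e t} := by
    apply card_nbij' (σ * ·) (σ⁻¹ * ·)
    · intro π hπ
      simp_all [Perm.mul_apply]
    · intro π hπ
      simp only [coe_filter, mem_univ, true_and] at hπ ⊢
      intro t
      rw [Perm.mul_apply, hπ, ← hσ']
      simp
    · intro π _; simp
    · intro π _; simp
  rw [hstab, ← Fintype.card_subtype]
  let p : α → Prop := (· ∉ univ.map e)
  calc Fintype.card {π : Perm α // ∀ t, π (e t) = e t}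
      = Fintype.card {π : Perm α // ∀ a, ¬ p a → π a = a} :=
        Fintype.card_congr (Equiv.subtypeEquivRight fun π => by simp [p])
    _ = Fintype.card (Perm {a // p a}) :=
        (Fintype.card_congr (Perm.subtypeEquivSubtypePerm p)).symm
    _ = (Fintype.card α - Fintype.card ι)! := by
        rw [Fintype.card_perm, Fintype.card_subtype_compl, Fintype.card_coe, card_map,
          Finset.card_univ]

theorem card_filter_embedding_forall_mem {ι : Type*} [Fintype ι] [DecidableEq ι]
    (Y : Finset α) :
    #{f : ι ↪ α | ∀ t, f t ∈ Y} = (#Y).descFactorial (Fintype.card ι) := by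
  rw [← Fintype.card_subtype]
  exact (Fintype.card_congr (Equiv.codRestrict ι (Y : Set α))).trans
    (by simp [Fintype.card_embedding_eq])

theorem card_filter_perm_forall_mem (s Y : Finset α) :
    #{π : Perm α | ∀ x ∈ s, π x ∈ Y} =
      (#Y).descFactorial #s * (Fintype.card α - #s)! := by
  let e : s ↪ α := Function.Embedding.subtype _
  rw [card_eq_sum_card_fiberwise (f := fun π : Perm α => e.trans π.toEmbedding)
    (t := {f : s ↪ α | ∀ x, f x ∈ Y}) (by intro π hπ; simpa [e] using hπ)]
  rw [sum_congr rfl (g := fun _ => (Fintype.card α - #s)!), sum_const, smul_eq_mul,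
    card_filter_embedding_forall_mem, Fintype.card_coe]
  intro f hf
  simp only [mem_filter, mem_univ, true_and] at hf
  rw [← Fintype.card_coe s, ← card_filter_perm_forall_apply_eq e f]
  congr 1
  ext π
  simp only [mem_filter, mem_univ, true_and, Function.Embedding.ext_iff]
  refine ⟨fun h => h.2, fun h => ⟨fun x hx => ?_, h⟩⟩
  have hπx : π x = f ⟨x, hx⟩ := h ⟨x, hx⟩
  exact hπx ▸ hf ⟨x, hx⟩

theorem card_filter_perm_apply_mem (i : α) (Y : Finset α) :
    #{π : Perm α | π i ∈ Y} = #Y * (Fintype.card α - 1)! := by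
  simpa using card_filter_perm_forall_mem {i} Y

theorem card_filter_perm_apply_mem_and_apply_mem {i j : α} (hij : i ≠ j) (Y : Finset α) :
    #{π : Perm α | π i ∈ Y ∧ π j ∈ Y} =
      (#Y).descFactorial 2 * (Fintype.card α - 2)! := by
  simpa [card_pair hij] using card_filter_perm_forall_mem {i, j} Y

theorem sum_card_filter_perm_sq (X Y : Finset α) :
    ∑ π : Perm α, #{i ∈ X | π i ∈ Y} ^ 2 =
      #X * (#Y * (Fintype.card α - 1)!) +
        (#X).descFactorial 2 * ((#Y).descFactorial 2 * (Fintype.card α - 2)!) := by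
  calc ∑ π : Perm α, #{i ∈ X | π i ∈ Y} ^ 2
      = ∑ i ∈ X, ∑ j ∈ X, #{π : Perm α | π i ∈ Y ∧ π j ∈ Y} := by
        simp only [sq, card_filter, sum_mul_sum, ite_zero_mul_ite_zero, mul_one]
        rw [sum_comm]
        exact sum_congr rfl fun i _ => sum_comm
    _ = ∑ i ∈ X, (#Y * (Fintype.card α - 1)! +
          (#X - 1) * ((#Y).descFactorial 2 * (Fintype.card α - 2)!)) := by
        refine sum_congr rfl fun i hi => ?_
        rw [← add_sum_erase _ _ hi, sum_congr rfl fun j hj =>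
          card_filter_perm_apply_mem_and_apply_mem (ne_of_mem_erase hj).symm Y,
          sum_const, card_erase_of_mem hi, smul_eq_mul]
        simp only [and_self, card_filter_perm_apply_mem]
    _ = _ := by
        rw [sum_const, smul_eq_mul, Nat.descFactorial_succ #X 1, Nat.descFactorial_one]
        ring

-- For `card α < 2` the second term on the right is `0` through `x / 0 = 0`.
theorem sum_card_filter_perm_sq_div_factorial (X Y : Finset α) :
    (∑ π : Perm α, (#{i ∈ X | π i ∈ Y} : ℝ) ^ 2) / (Fintype.card α)! =
      #X * (#Y / Fintype.card α) +
        (#X).descFactorial 2 * ((#Y).descFactorial 2 / (Fintype.card α).descFactorial 2) := by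
  have hY : #Y ≤ Fintype.card α := card_le_univ Y
  have key := congrArg (fun m : ℕ => (m : ℝ) / (Fintype.card α)!) (sum_card_filter_perm_sq X Y)
  simp only [Nat.cast_sum, Nat.cast_pow, Nat.cast_add, Nat.cast_mul] at key
  have h₁ := cast_descFactorial_mul_factorial_div_factorial 1 hY
  rw [Nat.descFactorial_one, Nat.descFactorial_one] at h₁
  rw [key, add_div, mul_div_assoc (#X : ℝ), mul_div_assoc ((#X).descFactorial 2 : ℝ), h₁,
    cast_descFactorial_mul_factorial_div_factorial 2 hY]

end

theorem stmt_3_general (N : ℕ) (X₁ X₂ : Finset (Fin N)) :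
    (X₁.card : ℝ) * X₂.card / N ≤
      (∑ π : Equiv.Perm (Fin N),
        ((X₁.filter (fun i => π i ∈ X₂)).card : ℝ) ^ 2) / Nat.factorial N ∧
    (∑ π : Equiv.Perm (Fin N),
        ((X₁.filter (fun i => π i ∈ X₂)).card : ℝ) ^ 2) / Nat.factorial N ≤
      (X₁.card : ℝ) * X₂.card / N + (X₁.card : ℝ) ^ 2 * (X₂.card : ℝ) ^ 2 / (N : ℝ) ^ 2 := by
  have hE := sum_card_filter_perm_sq_div_factorial X₁ X₂
  rw [Fintype.card_fin] at hE
  rw [hE, mul_div_assoc]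
  have hX₁ : ((#X₁).descFactorial 2 : ℝ) ≤ (#X₁ : ℝ) ^ 2 := by
    exact_mod_cast Nat.descFactorial_le_pow _ 2
  have hX₂ : ((#X₂).descFactorial 2 : ℝ) / N.descFactorial 2 ≤ ((#X₂ : ℝ) / N) ^ 2 :=
    cast_descFactorial_two_div_le_sq ((card_le_univ X₂).trans_eq (Fintype.card_fin N))
  constructor
  · exact le_add_of_nonneg_right (by positivity)
  · calc _ ≤ (#X₁ : ℝ) * (#X₂ / N) + (#X₁ : ℝ) ^ 2 * ((#X₂ : ℝ) / N) ^ 2 := by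
          gcongr
      _ = _ := by ring

theorem stmt_3 (N : ℕ) (X₁ X₂ : Finset (Fin N)) (h₁ : X₁.Nonempty) (h₂ : X₂.Nonempty) :
    (X₁.card : ℝ) * X₂.card / N ≤
      (∑ π : Equiv.Perm (Fin N),
        ((X₁.filter (fun i => π i ∈ X₂)).card : ℝ) ^ 2) / Nat.factorial N ∧
    (∑ π : Equiv.Perm (Fin N),
        ((X₁.filter (fun i => π i ∈ X₂)).card : ℝ) ^ 2) / Nat.factorial N ≤
      (X₁.card : ℝ) * X₂.card / N + (X₁.card : ℝ) ^ 2 * (X₂.card : ℝ) ^ 2 / (N : ℝ) ^ 2 :=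
  stmt_3_general N X₁ X₂
end

section
/- The sequence a_N = C(N-√N, √N)/C(N, √N), where √N = 2^n and N = 2^{2n}, is monotonically increasing in n and converges to 1/e as n → ∞. -/
/-!
Write `C(N - m, m) / C(N, m) = ∏_{i<m} (1 - m / (N - i))`. For `N = m²` every factor lies between
`1 - 1/(m-1)` and `1 - 1/m`, so the ratio is squeezed between `(1 - 1/(m-1))^m` and `(1 - 1/m)^m`,
both of which tend to `1/e`. Passing from `m` to `2m`, the `2m` factors group into consecutive
pairs, each of which dominates the corresponding factor for `m`; this gives monotonicity.
-/

open Finset Filter Real Topology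

theorem Finset.prod_range_two_mul {M : Type*} [CommMonoid M] (f : ℕ → M) (m : ℕ) :
    ∏ k ∈ range (2 * m), f k = ∏ j ∈ range m, f (2 * j) * f (2 * j + 1) := by
  induction m with
  | zero => simp
  | succ m ih =>
    rw [Nat.mul_succ, prod_range_succ, prod_range_succ, ih, prod_range_succ, mul_assoc]

theorem Nat.choose_div_choose_eq_prod (a b k : ℕ) :
    (a.choose k : ℝ) / b.choose k = ∏ i ∈ range k, ((a - i : ℕ) : ℝ) / (b - i : ℕ) := by
  have hk : (k.factorial : ℝ) ≠ 0 := by positivity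
  rw [prod_div_distrib, ← Nat.cast_prod, ← Nat.cast_prod, ← Nat.descFactorial_eq_prod_range,
    ← Nat.descFactorial_eq_prod_range, Nat.descFactorial_eq_factorial_mul_choose,
    Nat.descFactorial_eq_factorial_mul_choose, Nat.cast_mul, Nat.cast_mul,
    mul_div_mul_left _ _ hk]

theorem Nat.choose_sub_div_choose_eq_prod {N m : ℕ} (h : 2 * m ≤ N + 1) :
    ((N - m).choose m : ℝ) / N.choose m = ∏ i ∈ range m, (1 - m / ((N : ℝ) - i)) := by
  rw [Nat.choose_div_choose_eq_prod]
  refine prod_congr rfl fun i hi => ?_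
  have hi : i < m := mem_range.mp hi
  have hN : (i : ℝ) < N := by exact_mod_cast (by omega : i < N)
  rw [Nat.sub_sub, Nat.cast_sub (by omega), Nat.cast_sub (by omega), Nat.cast_add,
    one_sub_div (by linarith)]
  ring

/-- The paper's `a_N` for `N = m ^ 2`. -/
noncomputable def chooseRatio (m : ℕ) : ℝ := ((m ^ 2 - m).choose m : ℝ) / (m ^ 2).choose m

theorem chooseRatio_eq_prod (m : ℕ) :
    chooseRatio m = ∏ i ∈ range m, (1 - m / ((m : ℝ) ^ 2 - i)) := by
  rw [chooseRatio, Nat.choose_sub_div_choose_eq_prod (by nlinarith [sq_nonneg ((m : ℤ) - 1)])]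
  push_cast
  rfl

theorem chooseRatio_factor_nonneg {m i : ℕ} (hi : i < m) :
    0 ≤ 1 - (m : ℝ) / ((m : ℝ) ^ 2 - i) := by
  have hi : (i : ℝ) + 1 ≤ m := by exact_mod_cast hi
  rw [sub_nonneg, div_le_one (by nlinarith)]
  nlinarith

theorem chooseRatio_le (m : ℕ) : chooseRatio m ≤ (1 - 1 / (m : ℝ)) ^ m := by
  rw [chooseRatio_eq_prod, pow_eq_prod_const (1 - 1 / (m : ℝ))]
  refine prod_le_prod (fun i hi => chooseRatio_factor_nonneg (mem_range.mp hi)) fun i hi => ?_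
  have hi : (i : ℝ) + 1 ≤ m := by exact_mod_cast mem_range.mp hi
  rw [show 1 / (m : ℝ) = m / (m : ℝ) ^ 2 by field_simp]
  gcongr
  · nlinarith
  · linarith [sq_nonneg (i : ℝ)]

theorem le_chooseRatio {m : ℕ} (hm : 2 ≤ m) : (1 - 1 / ((m : ℝ) - 1)) ^ m ≤ chooseRatio m := by
  rw [chooseRatio_eq_prod, pow_eq_prod_const]
  have hm : (2 : ℝ) ≤ m := by exact_mod_cast hm
  refine prod_le_prod (fun _ _ => ?_) fun i hi => ?_
  · rw [sub_nonneg, div_le_one (by linarith)]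
    linarith
  · rw [show 1 / ((m : ℝ) - 1) = m / ((m : ℝ) ^ 2 - m) by field_simp]
    gcongr
    · nlinarith
    · exact (mem_range.mp hi).le

theorem one_sub_div_sq_sub_le_mul {m j : ℝ} (hj : 0 ≤ j) (hjm : j + 1 ≤ m) :
    1 - m / (m ^ 2 - j) ≤
      (1 - 2 * m / ((2 * m) ^ 2 - 2 * j)) * (1 - 2 * m / ((2 * m) ^ 2 - (2 * j + 1))) := by
  have h1 : 0 < m ^ 2 - j := by nlinarith
  have h2 : 0 < (2 * m) ^ 2 - 2 * j := by nlinarith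
  have h3 : 0 < (2 * m) ^ 2 - (2 * j + 1) := by nlinarith
  rw [one_sub_div h1.ne', one_sub_div h2.ne', one_sub_div h3.ne', div_mul_div_comm,
    div_le_div_iff₀ h1 (mul_pos h2 h3)]
  have hm : 0 ≤ m := by linarith
  -- the difference of the two sides is `2m (2j (2m² - j) + m (2m² - m - 2j))`
  nlinarith [mul_nonneg hm (mul_nonneg hj (by nlinarith : 0 ≤ 2 * m ^ 2 - j)),
    mul_nonneg (mul_nonneg hm hm) (by nlinarith : 0 ≤ 2 * m ^ 2 - m - 2 * j)]

theorem chooseRatio_le_chooseRatio_two_mul (m : ℕ) : chooseRatio m ≤ chooseRatio (2 * m) := by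
  rw [chooseRatio_eq_prod, chooseRatio_eq_prod, prod_range_two_mul]
  refine prod_le_prod (fun i hi => chooseRatio_factor_nonneg (mem_range.mp hi)) fun j hj => ?_
  have hj : (j : ℝ) + 1 ≤ m := by exact_mod_cast mem_range.mp hj
  push_cast
  exact one_sub_div_sq_sub_le_mul j.cast_nonneg hj

theorem tendsto_one_sub_one_div_pow_exp :
    Tendsto (fun m : ℕ => (1 - 1 / (m : ℝ)) ^ m) atTop (𝓝 (exp (-1))) := by
  simpa [sub_eq_add_neg, neg_div] using tendsto_one_add_div_pow_exp (-1)

theorem tendsto_one_sub_one_div_sub_one_pow_exp :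
    Tendsto (fun m : ℕ => (1 - 1 / ((m : ℝ) - 1)) ^ m) atTop (𝓝 (exp (-1))) := by
  rw [← tendsto_add_atTop_iff_nat 1]
  have h := tendsto_one_sub_one_div_pow_exp.mul
    (tendsto_one_div_atTop_nhds_zero_nat.const_sub (1 : ℝ))
  simpa [pow_succ] using h

theorem tendsto_chooseRatio : Tendsto chooseRatio atTop (𝓝 (exp (-1))) :=
  tendsto_of_tendsto_of_tendsto_of_le_of_le' tendsto_one_sub_one_div_sub_one_pow_exp
    tendsto_one_sub_one_div_pow_exp ((eventually_ge_atTop 2).mono fun _ => le_chooseRatio)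
    (Eventually.of_forall chooseRatio_le)

theorem stmt_7 :
    Monotone (fun n : ℕ =>
      (Nat.choose (2 ^ (2 * n) - 2 ^ n) (2 ^ n) : ℝ) / Nat.choose (2 ^ (2 * n)) (2 ^ n)) ∧
    Filter.Tendsto (fun n : ℕ =>
      (Nat.choose (2 ^ (2 * n) - 2 ^ n) (2 ^ n) : ℝ) / Nat.choose (2 ^ (2 * n)) (2 ^ n))
      Filter.atTop (nhds (Real.exp (-1))) := by
  have h : (fun n : ℕ =>
      (Nat.choose (2 ^ (2 * n) - 2 ^ n) (2 ^ n) : ℝ) / Nat.choose (2 ^ (2 * n)) (2 ^ n)) =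
      fun n => chooseRatio (2 ^ n) := by
    simp only [chooseRatio, ← pow_mul']
  rw [h]
  refine ⟨monotone_nat_of_le_succ fun n => ?_,
    tendsto_chooseRatio.comp (tendsto_pow_atTop_atTop_of_one_lt one_lt_two)⟩
  rw [pow_succ']
  exact chooseRatio_le_chooseRatio_two_mul _
end

section
/- Let N ∈ ℕ, X₁, X₂ ⊆ Fin N, and G₁ = {π ∈ S_N : π(X₁) = X₁}, G₂ = {π ∈ S_N : π(X₂) = X₂}. Two permutations π, π' ∈ S_N lie in the same (G₁, G₂)-double coset G₁πG₂ if and only if they have the same number of X-pairs, i.e., |{i ∈ X₁ : π(i) ∈ X₂}| = |{i ∈ X₁ : π'(i) ∈ X₂}|. -/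
/-!
The map `i ↦ (i ∈ X₁, π i ∈ X₂)` sorts the points into four classes whose sizes are determined by
`|X₁|`, `|X₂|` and the number of X-pairs of `π`. If `π` and `π'` have equally many X-pairs, a
permutation `σ` carrying the classes of `π'` onto those of `π` preserves `X₁`, and then
`ω = π' σ⁻¹ π⁻¹` preserves `X₂`.
-/

open Finset Equiv

variable {α : Type*}

theorem Equiv.Perm.exists_comp_eq_of_natCard_fiber_eq {β : Type*} [Finite α] (f g : α → β)
    (h : ∀ b, Nat.card {x // g x = b} = Nat.card {x // f x = b}) :
    ∃ σ : Perm α, ∀ x, f (σ x) = g x :=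
  let e b := (Finite.card_eq.mp (h b)).some
  ⟨ofFiberEquiv e, ofFiberEquiv_map e⟩

theorem Finset.natCard_fiber_mem_prod_mem [Fintype α] [DecidableEq α] (s t : Finset α)
    (p q : Bool) :
    Nat.card {x // (decide (x ∈ s), decide (x ∈ t)) = (p, q)} =
      if p then if q then #(s ∩ t) else #s - #(s ∩ t)
      else if q then #t - #(s ∩ t) else Fintype.card α - (#s + #t - #(s ∩ t)) := by
  cases p <;> cases q <;>
    simp only [Prod.mk.injEq, decide_eq_true_iff, decide_eq_false_iff_not, Bool.false_eq_true,
      if_true, if_false, Nat.card_eq_fintype_card, Fintype.card_subtype]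
  · rw [← card_union, ← card_compl]; congr 1; ext; simp
  · rw [← card_sdiff]; congr 1; ext; simp [and_comm]
  · rw [inter_comm, ← card_sdiff]; congr 1; ext; simp
  · congr 1; ext; simp

theorem Finset.exists_perm_mem_iff_of_card_eq [Fintype α] [DecidableEq α] {s t s' t' : Finset α}
    (hs : #s' = #s) (ht : #t' = #t) (hst : #(s' ∩ t') = #(s ∩ t)) :
    ∃ σ : Perm α, ∀ x, (σ x ∈ s ↔ x ∈ s') ∧ (σ x ∈ t ↔ x ∈ t') := by
  obtain ⟨σ, hσ⟩ := Perm.exists_comp_eq_of_natCard_fiber_eq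
    (fun x => (decide (x ∈ s), decide (x ∈ t))) (fun x => (decide (x ∈ s'), decide (x ∈ t')))
    fun ⟨p, q⟩ => by rw [natCard_fiber_mem_prod_mem, natCard_fiber_mem_prod_mem, hs, ht, hst]
  exact ⟨σ, fun x => by simpa only [Prod.mk.injEq, decide_eq_decide] using hσ x⟩

theorem Finset.image_perm_eq_self_iff [DecidableEq α] (e : Perm α) (s : Finset α) :
    s.image e = s ↔ ∀ x, e x ∈ s ↔ x ∈ s := by
  refine ⟨fun h x => ?_, fun h => ?_⟩
  · conv_lhs => rw [← h]
    exact e.injective.mem_finset_image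
  · exact eq_of_subset_of_card_le (image_subset_iff.2 fun x => (h x).2)
      (card_image_of_injective _ e.injective).ge

section XPairs

variable [DecidableEq α] (X₁ X₂ : Finset α)

def numXPairs (π : Perm α) : ℕ := #(X₁.filter fun i => π i ∈ X₂)

theorem numXPairs_eq_card_inter (π : Perm α) :
    numXPairs X₁ X₂ π = #(X₁ ∩ X₂.map π.symm.toEmbedding) := by
  rw [numXPairs]
  congr 1
  ext
  simp [mem_map_equiv]

variable {X₁ X₂}

theorem numXPairs_mul_mul {ω σ : Perm α} (hω : ∀ y, ω y ∈ X₂ ↔ y ∈ X₂)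
    (hσ : ∀ x, σ x ∈ X₁ ↔ x ∈ X₁) (π : Perm α) :
    numXPairs X₁ X₂ (ω * π * σ) = numXPairs X₁ X₂ π := by
  rw [numXPairs, numXPairs, ← card_map σ.toEmbedding]
  congr 1
  ext x
  simp [mem_map_equiv, hω, ← hσ (σ.symm x)]

theorem exists_mul_mul_of_numXPairs_eq [Fintype α] {π π' : Perm α}
    (h : numXPairs X₁ X₂ π' = numXPairs X₁ X₂ π) :
    ∃ ω σ : Perm α, (∀ y, ω y ∈ X₂ ↔ y ∈ X₂) ∧ (∀ x, σ x ∈ X₁ ↔ x ∈ X₁) ∧ π' = ω * π * σ := by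
  rw [numXPairs_eq_card_inter, numXPairs_eq_card_inter] at h
  obtain ⟨σ, hσ⟩ := exists_perm_mem_iff_of_card_eq rfl (by simp) h
  refine ⟨π' * σ⁻¹ * π⁻¹, σ, fun y => ?_, fun x => (hσ x).1, by group⟩
  simpa [mem_map_equiv] using ((hσ (σ.symm (π.symm y))).2).symm

end XPairs

theorem stmt_9 (N : ℕ) (X₁ X₂ : Finset (Fin N)) (π π' : Equiv.Perm (Fin N)) :
    (∃ ω σ : Equiv.Perm (Fin N),
        X₂.image ω = X₂ ∧ X₁.image σ = X₁ ∧ π' = ω * π * σ) ↔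
      (X₁.filter fun i => π' i ∈ X₂).card = (X₁.filter fun i => π i ∈ X₂).card := by
  simp_rw [image_perm_eq_self_iff]
  exact ⟨fun ⟨ω, σ, hω, hσ, he⟩ => he ▸ numXPairs_mul_mul hω hσ π, exists_mul_mul_of_numXPairs_eq⟩
end

section
/- Let N ∈ ℕ, X₁, X₂ ⊆ Fin N, κ ∈ ℕ, and let S_N^κ be the set of permutations of Fin N with exactly κ X-pairs. Fix any π ∈ S_N^κ. If ω is drawn uniformly from G₁ = {σ : σ(X₂) = X₂} and σ is drawn uniformly and independently from G₂ = {σ : σ(X₁) = X₁}, then ω ∘ π ∘ σ is uniformly distributed on S_N^κ. -/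
/-!
The pairs `(ω, σ) ∈ G₁ × G₂` with `ω π σ = τ` are a translate of those with `ω π σ = π`, so the map
`(ω, σ) ↦ ω π σ` has fibres of equal size over the double coset `G₁ π G₂`, and it remains to see
that this double coset is `S_N^κ`. The number of X-pairs of `τ` is `#(X₁ ∩ τ⁻¹ X₂)`, which
`G₁ × G₂` does not change. Conversely, if `#(X₁ ∩ τ⁻¹ X₂) = #(X₁ ∩ π⁻¹ X₂)`, the Venn diagrams of
`(X₁, π⁻¹ X₂)` and `(X₁, τ⁻¹ X₂)` have regions of equal sizes, so some permutation `e` carries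
one pair of sets onto the other; then `e⁻¹ ∈ G₂`, `τ e π⁻¹ ∈ G₁` and `τ = (τ e π⁻¹) π e⁻¹`.
-/

open Equiv Finset DoubleCoset MulAction
open scoped Pointwise

section DoubleCosetFiber

variable {G : Type*} [Group G] [Fintype G] [DecidableEq G] (H K : Subgroup G)
  [DecidablePred (· ∈ H)] [DecidablePred (· ∈ K)]

def doubleCosetFiber (g t : G) : Finset (G × G) :=
  ((univ.filter (· ∈ H)) ×ˢ (univ.filter (· ∈ K))).filter fun p => p.1 * g * p.2 = t

variable {H K}

lemma card_doubleCosetFiber_of_mem {g t : G} (ht : t ∈ doubleCoset g H K) :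
    #(doubleCosetFiber H K g t) = #(doubleCosetFiber H K g g) := by
  obtain ⟨h₀, hh₀, k₀, hk₀, rfl⟩ := mem_doubleCoset.1 ht
  refine card_nbij' (fun p => (h₀⁻¹ * p.1, p.2 * k₀⁻¹)) (fun p => (h₀ * p.1, p.2 * k₀))
    ?_ ?_ (fun p _ => by simp) (fun p _ => by simp)
  · rintro ⟨h, k⟩
    simp only [doubleCosetFiber, coe_filter, mem_product, mem_filter, mem_univ, true_and,
      Set.mem_ofPred_eq, and_imp]
    intro hh hk hg
    refine ⟨⟨H.mul_mem (H.inv_mem hh₀) hh, K.mul_mem hk (K.inv_mem hk₀)⟩, ?_⟩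
    calc h₀⁻¹ * h * g * (k * k₀⁻¹) = h₀⁻¹ * (h * g * k) * k₀⁻¹ := by group
      _ = g := by rw [hg]; group
  · rintro ⟨h, k⟩
    simp only [doubleCosetFiber, coe_filter, mem_product, mem_filter, mem_univ, true_and,
      Set.mem_ofPred_eq, and_imp]
    intro hh hk hg
    refine ⟨⟨H.mul_mem hh₀ hh, K.mul_mem hk hk₀⟩, ?_⟩
    calc h₀ * h * g * (k * k₀) = h₀ * (h * g * k) * k₀ := by group
      _ = h₀ * g * k₀ := by rw [hg]

theorem card_doubleCosetFiber_mul_card {g t : G} {S : Finset G}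
    (hS : (S : Set G) = doubleCoset g H K) (ht : t ∈ S) :
    #(doubleCosetFiber H K g t) * #S = #(univ.filter (· ∈ H)) * #(univ.filter (· ∈ K)) := by
  have hmem : ∀ x ∈ S, x ∈ doubleCoset g H K := fun x hx => hS ▸ mem_coe.2 hx
  have hmaps : ∀ p ∈ (univ.filter (· ∈ H)) ×ˢ (univ.filter (· ∈ K)), p.1 * g * p.2 ∈ S := by
    rintro ⟨h, k⟩ hp
    simp only [mem_product, mem_filter, mem_univ, true_and] at hp
    rw [← mem_coe, hS]
    exact mem_doubleCoset.2 ⟨h, hp.1, k, hp.2, rfl⟩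
  calc #(doubleCosetFiber H K g t) * #S = ∑ x ∈ S, #(doubleCosetFiber H K g x) := by
        rw [sum_const_nat fun x hx => card_doubleCosetFiber_of_mem (hmem x hx),
          card_doubleCosetFiber_of_mem (hmem t ht), mul_comm]
    _ = #((univ.filter (· ∈ H)) ×ˢ (univ.filter (· ∈ K))) :=
        (card_eq_sum_card_fiberwise hmaps).symm
    _ = _ := card_product _ _

end DoubleCosetFiber

section PermFinsetPair

variable {α : Type*} [DecidableEq α]

lemma filter_apply_mem_eq_inter_inv_smul (X₁ X₂ : Finset α) (τ : Perm α) :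
    X₁.filter (τ · ∈ X₂) = X₁ ∩ τ⁻¹ • X₂ := by
  ext x
  simp [mem_inv_smul_finset_iff]

lemma image_eq_iff_mem_stabilizer (X : Finset α) (σ : Perm α) :
    X.image σ = X ↔ σ ∈ stabilizer (Perm α) X :=
  Iff.rfl

variable [Fintype α]

def vennRegion (A B : Finset α) (x : α) : Bool × Bool := (decide (x ∈ A), decide (x ∈ B))

lemma card_filter_vennRegion_eq {A B A' B' : Finset α} (hA : #A = #A') (hB : #B = #B')
    (hAB : #(A ∩ B) = #(A' ∩ B')) (c : Bool × Bool) :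
    #(univ.filter (vennRegion A B · = c)) = #(univ.filter (vennRegion A' B' · = c)) := by
  have hAB' : #(A ∪ B) = #(A' ∪ B') := by
    have := card_union_add_card_inter A B
    have := card_union_add_card_inter A' B'
    omega
  obtain ⟨_ | _, _ | _⟩ := c
  · have cell (A B : Finset α) : univ.filter (vennRegion A B · = (false, false)) = (A ∪ B)ᶜ := by
      ext; simp [vennRegion]
    rw [cell, cell, card_compl, card_compl, hAB']
  · have cell (A B : Finset α) : univ.filter (vennRegion A B · = (false, true)) = B \ A := by
      ext; simp [vennRegion, and_comm]
    rw [cell, cell, card_sdiff, card_sdiff, hB, hAB]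
  · have cell (A B : Finset α) : univ.filter (vennRegion A B · = (true, false)) = A \ B := by
      ext; simp [vennRegion]
    rw [cell, cell, card_sdiff, card_sdiff, hA, inter_comm, hAB, inter_comm]
  · have cell (A B : Finset α) : univ.filter (vennRegion A B · = (true, true)) = A ∩ B := by
      ext; simp [vennRegion]
    rw [cell, cell, hAB]

theorem exists_perm_smul_eq_and_smul_eq {A B A' B' : Finset α} (hA : #A = #A') (hB : #B = #B')
    (hAB : #(A ∩ B) = #(A' ∩ B')) : ∃ e : Perm α, e • A = A' ∧ e • B = B' := by
  have hcard c :
      Fintype.card {x // vennRegion A B x = c} = Fintype.card {x // vennRegion A' B' x = c} := by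
    simpa only [Fintype.card_subtype] using card_filter_vennRegion_eq hA hB hAB c
  let e := ofFiberEquiv fun c => Fintype.equivOfCardEq (hcard c)
  have he x : vennRegion A' B' (e x) = vennRegion A B x := ofFiberEquiv_map _ x
  refine ⟨e, ?_, ?_⟩ <;> ext y <;> obtain ⟨x, rfl⟩ := e.surjective y <;>
    rw [← Perm.smul_def, smul_mem_smul_finset_iff, Perm.smul_def]
  · simpa [vennRegion] using (congrArg Prod.fst (he x)).symm
  · simpa [vennRegion] using (congrArg Prod.snd (he x)).symm

theorem mem_doubleCoset_stabilizer_iff {X₁ X₂ : Finset α} {π τ : Perm α} :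
    τ ∈ doubleCoset π (stabilizer (Perm α) X₂) (stabilizer (Perm α) X₁) ↔
      #(X₁ ∩ τ⁻¹ • X₂) = #(X₁ ∩ π⁻¹ • X₂) := by
  constructor
  · intro h
    obtain ⟨ω, hω, σ, hσ, rfl⟩ := mem_doubleCoset.1 h
    have hω' : ω⁻¹ • X₂ = X₂ := mem_stabilizer_iff.1 (inv_mem (SetLike.mem_coe.1 hω))
    have hσ' : σ⁻¹ • X₁ = X₁ := mem_stabilizer_iff.1 (inv_mem (SetLike.mem_coe.1 hσ))
    calc #(X₁ ∩ (ω * π * σ)⁻¹ • X₂) = #(σ⁻¹ • (X₁ ∩ π⁻¹ • X₂)) := by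
          rw [smul_finset_inter, hσ', mul_inv_rev, mul_inv_rev, mul_smul, mul_smul, hω']
      _ = #(X₁ ∩ π⁻¹ • X₂) := card_smul_finset _ _
  · intro h
    obtain ⟨e, he₁, he₂⟩ := exists_perm_smul_eq_and_smul_eq (A := X₁) (B := π⁻¹ • X₂) rfl
      (by rw [card_smul_finset, card_smul_finset]) h.symm
    refine mem_doubleCoset.2 ⟨τ * e * π⁻¹, ?_, e⁻¹, inv_mem (mem_stabilizer_iff.2 he₁), by group⟩
    rw [SetLike.mem_coe, mem_stabilizer_iff, mul_smul, mul_smul, he₂, smul_inv_smul]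

end PermFinsetPair

theorem stmt_10 (N κ : ℕ) (X₁ X₂ : Finset (Fin N)) (π : Equiv.Perm (Fin N))
    (hπ : (X₁.filter fun i => π i ∈ X₂).card = κ)
    (τ : Equiv.Perm (Fin N)) (hτ : (X₁.filter fun i => τ i ∈ X₂).card = κ) :
    (((Finset.univ.filter fun ω : Equiv.Perm (Fin N) => X₂.image ω = X₂) ×ˢ
        (Finset.univ.filter fun σ : Equiv.Perm (Fin N) => X₁.image σ = X₁)).filter
          (fun p => p.1 * π * p.2 = τ)).card *
      (Finset.univ.filter fun τ' : Equiv.Perm (Fin N) =>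
        (X₁.filter fun i => τ' i ∈ X₂).card = κ).card =
    (Finset.univ.filter fun ω : Equiv.Perm (Fin N) => X₂.image ω = X₂).card *
      (Finset.univ.filter fun σ : Equiv.Perm (Fin N) => X₁.image σ = X₁).card := by
  classical
  have hG (X : Finset (Fin N)) : (univ.filter fun σ : Perm (Fin N) => X.image σ = X) =
      univ.filter (· ∈ stabilizer (Perm (Fin N)) X) :=
    filter_congr fun σ _ => image_eq_iff_mem_stabilizer X σ
  rw [hG X₁, hG X₂]
  refine card_doubleCosetFiber_mul_card ?_ (mem_filter.2 ⟨mem_univ τ, hτ⟩)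
  ext τ'
  simp [mem_doubleCoset_stabilizer_iff, filter_apply_mem_eq_inter_inv_smul, ← hπ]
end

section
/- Let N ∈ ℕ and X₁, X₂ ⊆ Fin N with X₁, X₂ nonempty. For any real u ≥ 6·|X₁||X₂|/N, the probability over a uniformly random permutation π that |X_π| ≥ |X₁||X₂|/N + u is at most exp(-3u/4). -/
/-!
A permutation with at least `k` pairs `i ∈ X₁`, `π i ∈ X₂` maps some `k`-subset of `X₁` into `X₂`.
With `a = #X₁` and `b = #X₂`, a fixed `k`-subset is mapped into `X₂` with probability
`b(b-1)⋯(b-k+1) / N(N-1)⋯(N-k+1) ≤ (b/N)^k`, so the union bound over the `(a choose k) ≤ a^k/k!`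
subsets gives `m^k/k! ≤ (e m/k)^k` with `m = ab/N`. Taking `k = ⌈m + u⌉ ≥ 7m` makes this at most `(e/7)^k ≤ e^{-3k/4} ≤ e^{-3u/4}`.
-/

open scoped Classical

open Finset Nat

lemma Nat.descFactorial_mul_pow_le {t n : ℕ} (h : t ≤ n) :
    ∀ k, t.descFactorial k * n ^ k ≤ t ^ k * n.descFactorial k
  | 0 => by simp
  | k + 1 => by
    have step : (t - k) * n ≤ t * (n - k) := by
      rw [Nat.sub_mul, Nat.mul_sub, Nat.mul_comm t k]
      exact Nat.sub_le_sub_left (Nat.mul_le_mul_left k h) _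
    calc t.descFactorial (k + 1) * n ^ (k + 1)
        = ((t - k) * n) * (t.descFactorial k * n ^ k) := by rw [descFactorial_succ]; ring
      _ ≤ (t * (n - k)) * (t ^ k * n.descFactorial k) :=
        Nat.mul_le_mul step (descFactorial_mul_pow_le h k)
      _ = t ^ (k + 1) * n.descFactorial (k + 1) := by rw [descFactorial_succ]; ring

lemma Nat.descFactorial_div_descFactorial_le {t n : ℕ} (h : t ≤ n) (k : ℕ) :
    (t.descFactorial k : ℝ) / n.descFactorial k ≤ ((t : ℝ) / n) ^ k := by
  rcases (n.descFactorial k).eq_zero_or_pos with h0 | hpos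
  · rw [h0, Nat.cast_zero, div_zero]
    positivity
  have hpow : 0 < n ^ k := hpos.trans_le (n.descFactorial_le_pow k)
  rw [div_pow, div_le_div_iff₀ (by exact_mod_cast hpos) (by exact_mod_cast hpow)]
  exact_mod_cast descFactorial_mul_pow_le h k

lemma Real.pow_div_factorial_le_exp_one_mul_div_pow {x : ℝ} (hx : 0 ≤ x) (k : ℕ) :
    x ^ k / k ! ≤ (exp 1 * x / k) ^ k := by
  rcases k.eq_zero_or_pos with rfl | hk
  · simp
  have hk' : (k : ℝ) ≠ 0 := by positivity
  calc x ^ k / k ! = (x / k) ^ k * ((k : ℝ) ^ k / k !) := by rw [div_pow]; field_simp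
    _ ≤ (x / k) ^ k * exp k := by gcongr; exact pow_div_factorial_le_exp _ k.cast_nonneg k
    _ = (exp 1 * x / k) ^ k := by rw [← exp_one_pow]; ring

lemma Real.exp_one_div_seven_le : exp 1 / 7 ≤ exp (-(3 / 4)) := by
  have h : exp (7 / 4) ^ 4 ≤ 7 ^ 4 := by
    rw [← exp_nat_mul, show ((4 : ℕ) : ℝ) * (7 / 4) = (7 : ℕ) by norm_num, ← exp_one_pow]
    calc exp 1 ^ 7 ≤ 3 ^ 7 := by gcongr; exact exp_one_lt_three.le
      _ ≤ 7 ^ 4 := by norm_num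
  have h74 : exp (7 / 4) ≤ 7 :=
    (pow_le_pow_iff_left₀ (exp_pos _).le (by norm_num) (by norm_num)).1 h
  calc exp 1 / 7 ≤ exp 1 / exp (7 / 4) := by gcongr
    _ = exp (-(3 / 4)) := by rw [← exp_sub]; norm_num

section Perm

variable {α : Type*} [Fintype α] [DecidableEq α]

lemma Equiv.Perm.card_fixing (S : Finset α) :
    #{σ : Equiv.Perm α | ∀ i ∈ S, σ i = i} = (Fintype.card α - #S)! := by
  rw [← Fintype.card_subtype]
  have e : {σ : Equiv.Perm α // ∀ i ∈ S, σ i = i} ≃ Equiv.Perm {i // i ∉ S} :=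
    (Equiv.subtypeEquivRight (by simp)).trans (Equiv.Perm.subtypeEquivSubtypePerm (· ∉ S)).symm
  rw [Fintype.card_congr e, Fintype.card_perm, Fintype.card_subtype_compl, Fintype.card_coe]

/-- Two permutations have the same restriction to `S` only if they differ by a permutation
fixing `S` pointwise, and the restrictions are embeddings `S ↪ T`. -/
lemma Equiv.Perm.card_mapsTo_le (S T : Finset α) :
    #{π : Equiv.Perm α | ∀ i ∈ S, π i ∈ T} ≤
      (Fintype.card α - #S)! * (#T).descFactorial #S := by
  set s : Finset (Equiv.Perm α) := {π | ∀ i ∈ S, π i ∈ T}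
  let restrict (π : Equiv.Perm α) (i : S) : α := π i
  have fiber : ∀ f ∈ s.image restrict, #{π ∈ s | restrict π = f} ≤ (Fintype.card α - #S)! := by
    simp only [mem_image]
    rintro _ ⟨σ, -, rfl⟩
    rw [← card_fixing S]
    refine card_le_card_of_injOn (σ⁻¹ * ·) (fun π hπ => ?_) (fun _ _ _ _ => mul_left_cancel)
    simp only [mem_coe, mem_filter, mem_univ, true_and] at hπ ⊢
    intro i hi
    have : π i = σ i := congrFun hπ.2 ⟨i, hi⟩
    simp [this]
  have image_sub : s.image restrict ⊆ univ.image fun (e : S ↪ T) (i : S) => (e i : α) := by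
    simp only [subset_iff, mem_image, mem_univ, true_and, forall_exists_index, and_imp]
    rintro _ π hπ rfl
    simp only [s, mem_filter, mem_univ, true_and] at hπ
    refine ⟨⟨fun i => ⟨π i, hπ i i.2⟩, fun i j h => ?_⟩, rfl⟩
    exact Subtype.ext (π.injective (congrArg Subtype.val h))
  calc #s ≤ (Fintype.card α - #S)! * #(s.image restrict) := card_le_mul_card_image s _ fiber
    _ ≤ (Fintype.card α - #S)! * #(univ.image fun (e : S ↪ T) (i : S) => (e i : α)) := by
      gcongr
    _ ≤ (Fintype.card α - #S)! * Fintype.card (S ↪ T) := by gcongr; exact card_image_le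
    _ = (Fintype.card α - #S)! * (#T).descFactorial #S := by
      rw [Fintype.card_embedding_eq, Fintype.card_coe, Fintype.card_coe]

lemma Equiv.Perm.card_mapsTo_div_factorial_le (S T : Finset α) :
    (#{π : Equiv.Perm α | ∀ i ∈ S, π i ∈ T} : ℝ) / (Fintype.card α)! ≤
      ((#T : ℝ) / Fintype.card α) ^ #S := by
  have hS : #S ≤ Fintype.card α := card_le_univ S
  have hfact : ((Fintype.card α - #S)! * (Fintype.card α).descFactorial #S : ℝ) =
      (Fintype.card α)! := by exact_mod_cast factorial_mul_descFactorial hS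
  calc (#{π : Equiv.Perm α | ∀ i ∈ S, π i ∈ T} : ℝ) / (Fintype.card α)!
      ≤ ((Fintype.card α - #S)! * (#T).descFactorial #S : ℝ) / (Fintype.card α)! := by
        gcongr; exact_mod_cast card_mapsTo_le S T
    _ = ((#T).descFactorial #S : ℝ) / (Fintype.card α).descFactorial #S := by
        rw [← hfact, mul_div_mul_left _ _ (by positivity)]
    _ ≤ ((#T : ℝ) / Fintype.card α) ^ #S :=
        descFactorial_div_descFactorial_le (card_le_univ T) _

lemma Equiv.Perm.card_le_card_filter_mem_div_factorial_le (S T : Finset α) (k : ℕ) :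
    (#{π : Equiv.Perm α | k ≤ #{i ∈ S | π i ∈ T}} : ℝ) / (Fintype.card α)! ≤
      ((#S * #T : ℝ) / Fintype.card α) ^ k / k ! := by
  have cover : ({π : Equiv.Perm α | k ≤ #{i ∈ S | π i ∈ T}} : Finset _) ⊆
      (S.powersetCard k).biUnion fun R => {π | ∀ i ∈ R, π i ∈ T} := by
    intro π hπ
    obtain ⟨R, hR, hRk⟩ := exists_subset_card_eq (mem_filter.1 hπ).2
    simp only [mem_biUnion, mem_powersetCard, mem_filter, mem_univ, true_and]
    exact ⟨R, ⟨hR.trans (filter_subset _ _), hRk⟩, fun i hi => (mem_filter.1 (hR hi)).2⟩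
  calc (#{π : Equiv.Perm α | k ≤ #{i ∈ S | π i ∈ T}} : ℝ) / (Fintype.card α)!
      ≤ (∑ R ∈ S.powersetCard k, #{π : Equiv.Perm α | ∀ i ∈ R, π i ∈ T} : ℝ) /
          (Fintype.card α)! := by
        gcongr; exact_mod_cast (card_le_card cover).trans card_biUnion_le
    _ ≤ ∑ _R ∈ S.powersetCard k, ((#T : ℝ) / Fintype.card α) ^ k := by
        rw [sum_div]
        refine sum_le_sum fun R hR => ?_
        rw [← (mem_powersetCard.1 hR).2]
        exact card_mapsTo_div_factorial_le R T
    _ = (#S).choose k * ((#T : ℝ) / Fintype.card α) ^ k := by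
        rw [sum_const, card_powersetCard, nsmul_eq_mul]
    _ ≤ (#S : ℝ) ^ k / k ! * ((#T : ℝ) / Fintype.card α) ^ k := by
        gcongr; exact choose_le_pow_div k _
    _ = ((#S * #T : ℝ) / Fintype.card α) ^ k / k ! := by ring

end Perm

lemma Real.pow_div_factorial_le_exp_neg {m u : ℝ} {k : ℕ} (hm : 0 ≤ m) (hu : 6 * m ≤ u)
    (hk : m + u ≤ k) : m ^ k / k ! ≤ exp (-(3 / 4) * u) :=
  calc m ^ k / k ! ≤ (exp 1 * m / k) ^ k := pow_div_factorial_le_exp_one_mul_div_pow hm k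
    _ ≤ (exp 1 / 7) ^ k := by
        refine pow_le_pow_left₀ (by positivity) ?_ k
        calc exp 1 * m / k = exp 1 * (m / k) := mul_div_assoc ..
          _ ≤ exp 1 * (1 / 7) := by
            refine mul_le_mul_of_nonneg_left ?_ (exp_pos 1).le
            exact div_le_of_le_mul₀ (Nat.cast_nonneg (α := ℝ) k) (by norm_num) (by linarith)
          _ = exp 1 / 7 := by ring
    _ ≤ exp (-(3 / 4)) ^ k := by gcongr; exact exp_one_div_seven_le
    _ ≤ exp (-(3 / 4) * u) := by
        rw [← exp_nat_mul, exp_le_exp]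
        linarith

theorem stmt_13_general (N : ℕ) (X₁ X₂ : Finset (Fin N))
    (u : ℝ) (hu : 6 * ((X₁.card : ℝ) * X₂.card / N) ≤ u) :
    ((Finset.univ.filter (fun π : Equiv.Perm (Fin N) =>
        (X₁.card : ℝ) * X₂.card / N + u ≤ (X₁.filter fun i => π i ∈ X₂).card)).card : ℝ) /
        Nat.factorial N ≤ Real.exp (-(3 / 4) * u) := by
  set k := ⌈(X₁.card : ℝ) * X₂.card / N + u⌉₊
  calc _ ≤ (#{σ : Equiv.Perm (Fin N) | k ≤ #{i ∈ X₁ | σ i ∈ X₂}} : ℝ) / N ! := by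
        gcongr with σ
        exact ceil_le.2
    _ ≤ ((X₁.card : ℝ) * X₂.card / N) ^ k / k ! := by
        simpa only [Fintype.card_fin] using
          Equiv.Perm.card_le_card_filter_mem_div_factorial_le X₁ X₂ k
    _ ≤ Real.exp (-(3 / 4) * u) := Real.pow_div_factorial_le_exp_neg (by positivity) hu (le_ceil _)

theorem stmt_13 (N : ℕ) (X₁ X₂ : Finset (Fin N)) (h₁ : X₁.Nonempty) (h₂ : X₂.Nonempty)
    (u : ℝ) (hu : 6 * ((X₁.card : ℝ) * X₂.card / N) ≤ u) :
    ((Finset.univ.filter (fun π : Equiv.Perm (Fin N) =>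
        (X₁.card : ℝ) * X₂.card / N + u ≤ (X₁.filter fun i => π i ∈ X₂).card)).card : ℝ) /
        Nat.factorial N ≤ Real.exp (-(3 / 4) * u) :=
  stmt_13_general N X₁ X₂ u hu
end

section
/- Let N ∈ ℕ and X₁, X₂ ⊆ Fin N nonempty, and let D_X be the distribution on S_N with Pr[π] = |X_π| / ∑_{σ ∈ S_N} |X_σ|. Then the expected number of X-pairs under D_X equals E_{σ~uniform}[|X_σ|²] / E_{σ~uniform}[|X_σ|], and satisfies 1 ≤ E_{π~D_X}[|X_π|] ≤ 1 + |X₁||X₂|/N. -/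
/-!
Writing `c σ = #{i ∈ X₁ | σ i ∈ X₂}`, the expectation under `D_X` is `∑ c² / ∑ c`. Both sums
are computed by double counting: a uniform permutation sends a given point, resp. a given pair
of distinct points, to a given point, resp. a given pair of distinct points, in `(N-1)!`,
resp. `(N-2)!`, ways. Hence `∑ c = ab (N-1)!` and
`∑ c² = ∑ c + a(a-1) b(b-1) (N-2)!`, where `a = #X₁`, `b = #X₂`, so the expectation is
`1 + (a-1)(b-1)/(N-1)`, which lies between `1` and `1 + ab/N` because `a, b ≤ N`.
-/

open Finset Function
open scoped Nat

namespace Equiv.Perm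

variable {α : Type*} [DecidableEq α]

theorem card_filter_apply_mem_sq (σ : Perm α) (X Y : Finset α) :
    #{i ∈ X | σ i ∈ Y} ^ 2 =
      #{i ∈ X | σ i ∈ Y} + #{p ∈ X.offDiag | (σ p.1, σ p.2) ∈ Y.offDiag} := by
  have hoff : {p ∈ X.offDiag | (σ p.1, σ p.2) ∈ Y.offDiag} = {i ∈ X | σ i ∈ Y}.offDiag := by
    ext p
    simp only [mem_filter, mem_offDiag, σ.injective.ne_iff]
    tauto
  rw [hoff, offDiag_card, sq, Nat.add_sub_cancel' (Nat.le_mul_self _)]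

variable [Fintype α]

/-- Permutations act transitively on injections `ι → α`, so the fibres of `σ ↦ σ ∘ f` all have
the same size, and there are `(#α).descFactorial #ι` of them. -/
theorem card_filter_forall_apply_eq {ι : Type*} [Fintype ι] {f g : ι → α}
    (hf : Injective f) (hg : Injective g) :
    #{σ : Perm α | ∀ t, σ (f t) = g t} = (Fintype.card α - Fintype.card ι)! := by
  classical
  set fiber : (ι → α) → ℕ := fun g ↦ #{σ : Perm α | ∀ t, σ (f t) = g t}
  have fiber_eq : ∀ g' : ι ↪ α, fiber g' = fiber g := by
    intro g'
    obtain ⟨τ, hτ⟩ := exists_extending_pair g' g g'.injective hg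
    exact card_bij' (fun σ _ ↦ τ * σ) (fun σ _ ↦ τ⁻¹ * σ) (fun σ hσ ↦ by simp_all)
      (fun σ hσ ↦ by simp_all [← hτ]) (by simp) (by simp)
  have sum_fiber : ∑ g' : ι ↪ α, fiber g' = (Fintype.card α)! := by
    rw [← Fintype.card_perm, ← card_univ,
      card_eq_sum_card_fiberwise (f := fun σ : Perm α ↦ (⟨f, hf⟩ : ι ↪ α).trans σ.toEmbedding)
        (fun _ _ ↦ mem_univ _)]
    refine sum_congr rfl fun g' _ ↦ ?_
    simp only [fiber, DFunLike.ext_iff]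
    rfl
  have hle : Fintype.card ι ≤ Fintype.card α := Fintype.card_le_of_injective f hf
  rw [sum_const_nat fun g' _ ↦ fiber_eq g', card_univ, Fintype.card_embedding_eq,
    ← Nat.factorial_mul_descFactorial hle, mul_comm] at sum_fiber
  exact Nat.eq_of_mul_eq_mul_right (Nat.descFactorial_pos.mpr hle) sum_fiber

theorem card_filter_apply_eq (i k : α) :
    #{σ : Perm α | σ i = k} = (Fintype.card α - 1)! := by
  simpa using card_filter_forall_apply_eq (f := fun _ : Unit ↦ i) (g := fun _ ↦ k)
    (injective_of_subsingleton _) (injective_of_subsingleton _)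

theorem card_filter_apply_eq_and_apply_eq {i j k l : α} (hij : i ≠ j) (hkl : k ≠ l) :
    #{σ : Perm α | σ i = k ∧ σ j = l} = (Fintype.card α - 2)! := by
  simpa [Fin.forall_fin_two] using card_filter_forall_apply_eq (f := ![i, j]) (g := ![k, l])
    (injective_pair_iff_ne.mpr hij) (injective_pair_iff_ne.mpr hkl)

end Equiv.Perm

theorem Finset.sum_card_filter_mem_eq_sum_sum_card {G β γ : Type*} [Fintype G] [DecidableEq γ]
    (F : G → β → γ) (s : Finset β) (t : Finset γ) :
    ∑ g, #{x ∈ s | F g x ∈ t} = ∑ x ∈ s, ∑ y ∈ t, #{g | F g x = y} := by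
  simp only [card_filter]
  rw [sum_comm]
  refine sum_congr rfl fun x _ ↦ ?_
  rw [sum_comm]
  simp

namespace Equiv.Perm

variable {α : Type*} [Fintype α] [DecidableEq α]

theorem sum_card_filter_apply_mem (X Y : Finset α) :
    ∑ σ : Perm α, #{i ∈ X | σ i ∈ Y} = #X * #Y * (Fintype.card α - 1)! := by
  rw [sum_card_filter_mem_eq_sum_sum_card]
  simp [card_filter_apply_eq, mul_assoc]

theorem sum_card_filter_offDiag_apply_mem (X Y : Finset α) :
    ∑ σ : Perm α, #{p ∈ X.offDiag | (σ p.1, σ p.2) ∈ Y.offDiag} =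
      #X.offDiag * #Y.offDiag * (Fintype.card α - 2)! := by
  rw [sum_card_filter_mem_eq_sum_sum_card (fun (σ : Perm α) (p : α × α) ↦ (σ p.1, σ p.2)),
    sum_const_nat fun p hp ↦ sum_const_nat fun q hq ↦ ?_, mul_assoc]
  simp only [mem_offDiag] at hp hq
  simpa [Prod.ext_iff] using card_filter_apply_eq_and_apply_eq hp.2.2 hq.2.2

end Equiv.Perm

theorem Nat.mul_offDiag_mul_factorial_le {a b n : ℕ} (ha : a ≤ n) (hb : b ≤ n) :
    n * ((a * a - a) * (b * b - b) * (n - 2)!) ≤ a * b * (a * b * (n - 1)!) := by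
  rcases Nat.eq_zero_or_pos a with rfl | ha₀
  · simp
  rcases Nat.eq_zero_or_pos b with rfl | hb₀
  · simp
  obtain _ | _ | m := n
  · omega
  · obtain rfl : a = 1 := by omega
    simp
  · have core : (m + 2) * ((a - 1) * (b - 1)) ≤ (m + 1) * (a * b) := by
      zify [ha₀, hb₀]
      nlinarith
    have hfac : (m + 2 - 1)! = (m + 1) * (m + 2 - 2)! := Nat.factorial_succ m
    rw [hfac, ← Nat.mul_sub_one a, ← Nat.mul_sub_one b]
    calc (m + 2) * (a * (a - 1) * (b * (b - 1)) * (m + 2 - 2)!)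
        = (m + 2) * ((a - 1) * (b - 1)) * (a * b * (m + 2 - 2)!) := by ring
      _ ≤ (m + 1) * (a * b) * (a * b * (m + 2 - 2)!) := Nat.mul_le_mul_right _ core
      _ = a * b * (a * b * ((m + 1) * (m + 2 - 2)!)) := by ring

open Equiv.Perm in
theorem stmt_14 (N : ℕ) (X₁ X₂ : Finset (Fin N)) (h₁ : X₁.Nonempty) (h₂ : X₂.Nonempty)
    (E : ℝ)
    (hE : E = ∑ π : Equiv.Perm (Fin N),
        (((X₁.filter fun i => π i ∈ X₂).card : ℝ) /
            ∑ σ : Equiv.Perm (Fin N), ((X₁.filter fun i => σ i ∈ X₂).card : ℝ)) *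
          (X₁.filter fun i => π i ∈ X₂).card) :
    E = ((∑ σ : Equiv.Perm (Fin N), ((X₁.filter fun i => σ i ∈ X₂).card : ℝ) ^ 2) /
            Nat.factorial N) /
          ((∑ σ : Equiv.Perm (Fin N), ((X₁.filter fun i => σ i ∈ X₂).card : ℝ)) /
            Nat.factorial N) ∧
    1 ≤ E ∧ E ≤ 1 + (X₁.card : ℝ) * X₂.card / N := by
  set S : ℕ := ∑ σ : Equiv.Perm (Fin N), #{i ∈ X₁ | σ i ∈ X₂} with hS
  set P : ℕ := ∑ σ : Equiv.Perm (Fin N), #{p ∈ X₁.offDiag | (σ p.1, σ p.2) ∈ X₂.offDiag} with hP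
  have hSr : ∑ σ : Equiv.Perm (Fin N), ((X₁.filter fun i => σ i ∈ X₂).card : ℝ) = S := by
    rw [hS, Nat.cast_sum]
  have hQr : ∑ σ : Equiv.Perm (Fin N), ((X₁.filter fun i => σ i ∈ X₂).card : ℝ) ^ 2 = S + P := by
    exact_mod_cast (sum_congr rfl fun σ _ ↦ card_filter_apply_mem_sq σ X₁ X₂).trans sum_add_distrib
  have hEr : E = (S + P) / S := by
    rw [hE, ← hQr, ← hSr, sum_div]
    simp only [div_mul_eq_mul_div, sq]
  have hSpos : (0 : ℝ) < S := by
    have := h₁.card_pos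
    have := h₂.card_pos
    rw [hS, sum_card_filter_apply_mem]
    positivity
  have key : N * P ≤ #X₁ * #X₂ * S := by
    rw [hS, hP, sum_card_filter_apply_mem, sum_card_filter_offDiag_apply_mem, offDiag_card,
      offDiag_card]
    simpa using Nat.mul_offDiag_mul_factorial_le (card_le_univ X₁) (card_le_univ X₂)
  refine ⟨?_, ?_, ?_⟩
  · rw [hEr, hQr, hSr, div_div_div_cancel_right₀ (by positivity)]
  · rw [hEr, le_div_iff₀ hSpos]
    linarith [P.cast_nonneg (α := ℝ)]
  · rw [hEr, add_div, div_self hSpos.ne', add_le_add_iff_left,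
      div_le_div_iff₀ hSpos (by exact_mod_cast h₁.choose.pos)]
    exact_mod_cast (mul_comm P N).trans_le key
end
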